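/- In the two-market single-producer game with separable quadratic cost x_{11}^2 + x_{12}^2, demands p_1(z)=1−z, p_2(z)=2−2z, and Walrasian welfare, for every capacity 0 < χ < 7/25 the unique Nash equilibrium is x* = ((1+χ)/4, (1−χ)/3), y* = (χ,0), and at this equilibrium both net consumptions are strictly positive: z*_1 = (1−3χ)/4 > 0 and z*_2 = (1+2χ)/3 > 0, and prices satisfy p_1(z*_1) = (3/4)(1+χ) < (4/3)(1−χ) = p_2(z*_2). -/
import Mathlib


noncomputable section

/-- Net consumption in market 1: `z₁ = x₁₁ - (y₁ - y₂)`. -/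
def zz1 (x11 x12 y1 y2 : ℝ) : ℝ := x11 - (y1 - y2)

/-- Net consumption in market 2: `z₂ = x₁₂ + (y₁ - y₂)`. -/
def zz2 (x11 x12 y1 y2 : ℝ) : ℝ := x12 + (y1 - y2)

/-- Producer's utility with demands `p₁(z)=1-z`, `p₂(z)=2-2z` and separable cost
`x₁₁² + x₁₂²`. -/
def uPs (x11 x12 y1 y2 : ℝ) : ℝ :=
  x11 * (1 - zz1 x11 x12 y1 y2) + x12 * (2 - 2 * zz2 x11 x12 y1 y2) - x11 ^ 2 - x12 ^ 2

/-- Market maker's (Walrasian welfare) utility with separable cost. -/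
def uMs (x11 x12 y1 y2 : ℝ) : ℝ :=
  zz1 x11 x12 y1 y2 + 2 * zz2 x11 x12 y1 y2 - (zz1 x11 x12 y1 y2) ^ 2 / 2
    - (zz2 x11 x12 y1 y2) ^ 2 - x11 ^ 2 - x12 ^ 2

/-- Nash equilibrium of the two-market game with separable costs, capacity `χ`. -/
def Nash2s (χ x11 x12 y1 y2 : ℝ) : Prop :=
  0 ≤ x11 ∧ 0 ≤ x12 ∧ y1 ∈ Set.Icc 0 χ ∧ y2 ∈ Set.Icc 0 χ ∧
  (∀ a b : ℝ, 0 ≤ a → 0 ≤ b → uPs a b y1 y2 ≤ uPs x11 x12 y1 y2) ∧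
  (∀ w1 w2 : ℝ, w1 ∈ Set.Icc 0 χ → w2 ∈ Set.Icc 0 χ →
    uMs x11 x12 w1 w2 ≤ uMs x11 x12 y1 y2)

set_option maxHeartbeats 1000000

/-- with separable cost and capacity `0 < χ < 7/25`, the unique Nash
equilibrium is `x* = ((1+χ)/4, (1-χ)/3)`, `y* = (χ, 0)`; both net consumptions are
strictly positive and the prices satisfy `(3/4)(1+χ) < (4/3)(1-χ)`. -/
theorem two_market_separable_low_capacity
    (χ : ℝ) (hχ : 0 < χ) (hχ' : χ < 7 / 25) :
    Nash2s χ ((1 + χ) / 4) ((1 - χ) / 3) χ 0 ∧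
    (∀ x11 x12 y1 y2 : ℝ, Nash2s χ x11 x12 y1 y2 →
      x11 = (1 + χ) / 4 ∧ x12 = (1 - χ) / 3 ∧ y1 = χ ∧ y2 = 0) ∧
    zz1 ((1 + χ) / 4) ((1 - χ) / 3) χ 0 = (1 - 3 * χ) / 4 ∧
    0 < (1 - 3 * χ) / 4 ∧
    zz2 ((1 + χ) / 4) ((1 - χ) / 3) χ 0 = (1 + 2 * χ) / 3 ∧
    0 < (1 + 2 * χ) / 3 ∧
    1 - zz1 ((1 + χ) / 4) ((1 - χ) / 3) χ 0 = 3 / 4 * (1 + χ) ∧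
    2 - 2 * zz2 ((1 + χ) / 4) ((1 - χ) / 3) χ 0 = 4 / 3 * (1 - χ) ∧
    3 / 4 * (1 + χ) < 4 / 3 * (1 - χ) := by
  constructor
  · refine ⟨by linarith, by linarith, ⟨hχ.le, le_refl χ⟩, ⟨le_refl 0, hχ.le⟩, ?_, ?_⟩
    · intro a b ha hb
      simp only [uPs, zz1, zz2]
      nlinarith [sq_nonneg (a - (1 + χ) / 4), sq_nonneg (b - (1 - χ) / 3)]
    · intro w1 w2 hw1 hw2
      obtain ⟨hw1a, hw1b⟩ := hw1
      obtain ⟨hw2a, hw2b⟩ := hw2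
      simp only [uMs, zz1, zz2]
      have h1 : 0 ≤ χ - (w1 - w2) := by linarith
      have h2 : 0 ≤ (7 + 11 * χ) / 18 - χ - (w1 - w2) := by linarith
      nlinarith [mul_nonneg h1 h2]
  refine ⟨?_, ?_, by linarith, ?_, by linarith, ?_, ?_, by linarith⟩
  · intro x11 x12 y1 y2 ⟨hx1, hx2, hy1, hy2, hP, hM⟩
    obtain ⟨d, hd⟩ : ∃ d, d = y1 - y2 := ⟨_, rfl⟩
    have hd1 : d ≤ χ := by rw [hd]; linarith [hy1.2, hy2.1]
    have hd2 : -χ ≤ d := by rw [hd]; linarith [hy1.1, hy2.2]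
    have he1 : x11 = (1 + d) / 4 := by
      have h := hP ((1 + d) / 4) x12 (by linarith) hx2
      simp only [uPs, zz1, zz2] at h
      rw [← hd] at h
      nlinarith [sq_nonneg (x11 - (1 + d) / 4)]
    have he2 : x12 = (1 - d) / 3 := by
      have h := hP x11 ((1 - d) / 3) hx1 (by linarith)
      simp only [uPs, zz1, zz2] at h
      rw [← hd] at h
      nlinarith [sq_nonneg (x12 - (1 - d) / 3)]
    have hdχ : d = χ := by
      rcases le_total χ ((7 + 11 * d) / 36) with hc | hc
      · have h := hM χ 0 ⟨hχ.le, le_refl χ⟩ ⟨le_refl 0, hχ.le⟩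
        simp only [uMs, zz1, zz2] at h
        rw [← hd, he1, he2] at h
        ring_nf at h
        refine le_antisymm hd1 ?_
        have p1 : 0 ≤ χ - d := by linarith
        have p2 : 0 ≤ (7 + 11 * d) / 18 - 2 * χ := by linarith
        nlinarith [mul_nonneg p1 p2]
      · exfalso
        have hv0 : (0 : ℝ) ≤ (7 + 11 * d) / 36 := by linarith
        have h := hM ((7 + 11 * d) / 36) 0 ⟨hv0, hc⟩ ⟨le_refl 0, hχ.le⟩
        simp only [uMs, zz1, zz2] at h
        rw [← hd, he1, he2] at h
        ring_nf at h
        have p : 0 < (7 + 11 * d) / 36 - d := by linarith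
        nlinarith [mul_pos p p]
    have hy1e : y1 = χ := by rw [hdχ] at hd; linarith [hy1.2, hy2.1]
    have hy2e : y2 = 0 := by rw [hdχ] at hd; linarith [hy1.2, hy2.1]
    rw [hdχ] at he1 he2
    exact ⟨he1, he2, hy1e, hy2e⟩
  · simp only [zz1]; ring
  · simp only [zz2]; ring
  · simp only [zz1]; ring
  · simp only [zz2]; ring
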